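/- For every natural number n ≥ 1 and every real x with 2 ≤ x ≤ n, the partial sum f_n(x) = ∑_{k=1}^{n} μ(k) ν(x/k) equals −1. -/

import Mathlib

/-!
By Hermite's identity `⌊y⌋ + ⌊y + 1/2⌋ = ⌊2y⌋`, `ν(t) = ⌊t⌋ - 2⌊t/2⌋`, so for `x ≥ 2` the sum splits as
`∑ μ(k) ⌊x/k⌋ - 2 ∑ μ(k) ⌊(x/2)/k⌋`. Summing `∑_{d ∣ m} μ(d) = [m = 1]` over `m ≤ N` gives
`∑_{k ≤ N} μ(k) ⌊N/k⌋ = 1` for `N ≥ 1`, so both sums equal `1` (here `x/2 ≥ 1` is needed) and the total is `-1`.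
-/

noncomputable def nu (t : ℝ) : ℝ := Int.fract (t/2) + 1/2 - Int.fract (t/2 + 1/2)

open Finset ArithmeticFunction
open scoped ArithmeticFunction.Moebius

theorem sum_Icc_moebius_mul_div {R : Type*} [Ring R] {N n : ℕ} (hN : 1 ≤ N) (hNn : N ≤ n) :
    ∑ k ∈ Icc 1 n, (μ k : R) * (N / k : ℕ) = 1 := by
  have hIoc : ∑ k ∈ Ioc 0 N, (μ k : R) * (N / k : ℕ) = 1 := by
    have h := sum_Ioc_mul_zeta_eq_sum (μ : ArithmeticFunction R) N
    simp only [coe_moebius_mul_coe_zeta, one_apply, intCoe_apply] at h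
    rw [← h, sum_ite_eq']
    simp [hN]
  rw [← hIoc]
  refine (sum_subset (fun k hk => ?_) fun k hk hkN => ?_).symm
  · simp only [mem_Ioc, mem_Icc] at hk ⊢
    omega
  · simp only [mem_Ioc, mem_Icc] at hk hkN
    rw [Nat.div_eq_of_lt (by omega), Nat.cast_zero, mul_zero]

theorem sum_Icc_moebius_mul_floor_div {K : Type*} [Field K] [LinearOrder K] [IsStrictOrderedRing K]
    [FloorSemiring K] {y : K} {n : ℕ} (hy : 1 ≤ y) (hyn : ⌊y⌋₊ ≤ n) :
    ∑ k ∈ Icc 1 n, (μ k : K) * ⌊y / k⌋₊ = 1 := by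
  simp only [Nat.floor_div_natCast]
  exact sum_Icc_moebius_mul_div (Nat.one_le_floor_iff _ |>.mpr hy) hyn

theorem nu_eq_floor_sub_two_mul_floor_half (t : ℝ) : nu t = ⌊t⌋ - 2 * ⌊t / 2⌋ := by
  have hnu : nu t = ⌊t / 2 + 1 / 2⌋ - ⌊t / 2⌋ := by
    unfold nu Int.fract
    ring
  have hround : ⌊t / 2 + 1 / 2⌋ = (⌊t⌋ + 1) / 2 := by
    rw [← round_eq, round_eq_div, mul_div_cancel₀ t two_ne_zero]
  have hhalf : ⌊t / 2⌋ = ⌊t⌋ / 2 := mod_cast Int.floor_div_natCast t 2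
  rw [hnu, hround, hhalf]
  exact_mod_cast (by omega : (⌊t⌋ + 1) / 2 - ⌊t⌋ / 2 = ⌊t⌋ - 2 * (⌊t⌋ / 2))

theorem nu_eq_natFloor_sub_two_mul_natFloor_half {t : ℝ} (ht : 0 ≤ t) :
    nu t = ⌊t⌋₊ - 2 * ⌊t / 2⌋₊ := by
  rw [nu_eq_floor_sub_two_mul_floor_half, ← Int.natCast_floor_eq_floor ht,
    ← Int.natCast_floor_eq_floor (by positivity : 0 ≤ t / 2)]
  norm_cast

theorem stmt9 : ∀ n : ℕ, 1 ≤ n → ∀ x : ℝ, 2 ≤ x → x ≤ n →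
    ∑ k ∈ Finset.Icc 1 n, (ArithmeticFunction.moebius k : ℝ) * nu (x / k) = -1 := by
  intro n _ x hx hxn
  have hterm : ∀ k ∈ Icc 1 n, (μ k : ℝ) * nu (x / k) =
      (μ k : ℝ) * ⌊x / k⌋₊ - 2 * ((μ k : ℝ) * ⌊x / 2 / k⌋₊) := fun k _ => by
    rw [nu_eq_natFloor_sub_two_mul_natFloor_half (by positivity), div_right_comm]
    ring
  have hx_floor : ⌊x⌋₊ ≤ n := Nat.floor_le_of_le hxn
  have hx_half_floor : ⌊x / 2⌋₊ ≤ n := (Nat.floor_le_floor (by linarith)).trans hx_floor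
  rw [sum_congr rfl hterm, sum_sub_distrib, ← mul_sum,
    sum_Icc_moebius_mul_floor_div (by linarith) hx_floor,
    sum_Icc_moebius_mul_floor_div (by linarith) hx_half_floor]
  norm_num
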